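/- Extensional common reducts imply observational equivalence: let M and N be terms of arity k under P such that for all terms t₁,…,tₖ, M.t₁.···.tₖ =_P N.t₁.···.tₖ (common reduct). Then M ≈_P N. In particular (k=0), complete terms with a common reduct are observationally equivalent. -/

import Mathlib

/-- Terms of continuation calculus: names (coded as naturals) and dot. -/
inductive Tm where
  | name : ℕ → Tm
  | dot : Tm → Tm → Tm
deriving DecidableEq

/-- Right-hand sides of rules: names, variables (de Bruijn-style indices
into the left-hand side's variable list), and dot. -/
inductive Rhs where
  | name : ℕ → Rhs
  | var : ℕ → Rhs
  | dot : Rhs → Rhs → Rhs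
deriving DecidableEq

/-- A rule `n.x₁.⋯.xₖ → r`: head name, arity `k`, and right-hand side. -/
structure Rule where
  head : ℕ
  arity : ℕ
  rhs : Rhs
deriving DecidableEq

/-- A program is a finite set of rules. -/
abbrev Program := Finset Rule

/-- Variables occurring in a right-hand side. -/
def Rhs.HasVar : Rhs → ℕ → Prop
  | .name _, _ => False
  | .var w, v => w = v
  | .dot a b, v => a.HasVar v ∨ b.HasVar v

/-- Well-formedness: every variable of a right-hand side occurs in the
left-hand side, and there is at most one rule per head name. -/
def Program.Wf (P : Program) : Prop :=
  (∀ r ∈ P, ∀ v, r.rhs.HasVar v → v < r.arity) ∧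
  (∀ r₁ ∈ P, ∀ r₂ ∈ P, r₁.head = r₂.head → r₁ = r₂)

/-- `n.t₁.⋯.tₖ` : left-associated application of a term to a list of terms. -/
def Tm.apps : Tm → List Tm → Tm
  | h, [] => h
  | h, t :: ts => Tm.apps (h.dot t) ts

/-- Instantiation of a right-hand side with the terms matched by the
left-hand side variables; fails if some variable is out of range. -/
def Rhs.inst (ts : List Tm) : Rhs → Option Tm
  | .name n => some (.name n)
  | .var v => ts[v]?
  | .dot a b => do pure (.dot (← a.inst ts) (← b.inst ts))

/-- One-step evaluation `M →_P N`. -/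
def Step (P : Program) (M N : Tm) : Prop :=
  ∃ r ∈ P, ∃ ts : List Tm, ts.length = r.arity ∧
    M = Tm.apps (.name r.head) ts ∧ r.rhs.inst ts = some N

/-- Multi-step evaluation `M →*_P N`. -/
def Steps (P : Program) : Tm → Tm → Prop := Relation.ReflTransGen (Step P)

/-- `M` is final: it has no successor. -/
def Final (P : Program) (M : Tm) : Prop := ¬ ∃ N, Step P M N

/-- `M` terminates: it evaluates to a final term. -/
def Terminates (P : Program) (M : Tm) : Prop := ∃ N, Steps P M N ∧ Final P N

/-- The name `m` occurs in a term. -/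
def Tm.HasName (m : ℕ) : Tm → Prop
  | .name n => n = m
  | .dot a b => a.HasName m ∨ b.HasName m

/-- The name `m` occurs in a right-hand side. -/
def Rhs.HasName (m : ℕ) : Rhs → Prop
  | .name n => n = m
  | .var _ => False
  | .dot a b => a.HasName m ∨ b.HasName m

/-- The name `m` occurs (is mentioned) in a program. -/
def Program.HasName (P : Program) (m : ℕ) : Prop :=
  ∃ r ∈ P, r.head = m ∨ r.rhs.HasName m

/-- The name `m` is defined by the program (is the head of some rule). -/
def Program.Defines (P : Program) (m : ℕ) : Prop :=
  ∃ r ∈ P, r.head = m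

/-- Substitution of a term for a name, `M[fr := t]`. -/
def Tm.subName (m : ℕ) (t : Tm) : Tm → Tm
  | .name n => if n = m then t else .name n
  | .dot a b => .dot (Tm.subName m t a) (Tm.subName m t b)

/-- Common reduct relation `M =_P N`. -/
def CommonRed (P : Program) (M N : Tm) : Prop :=
  ∃ t, Steps P M t ∧ Steps P N t

/-- Observational equivalence `M ≈_P N`. -/
def ObsEq (P : Program) (M N : Tm) : Prop :=
  ∀ P' : Program, P'.Wf → P ⊆ P' →
    ∀ X : Tm, (Terminates P' (X.dot M) ↔ Terminates P' (X.dot N))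

/-- Renaming of names in a term. -/
def Tm.rename (f : ℕ → ℕ) : Tm → Tm
  | .name n => .name (f n)
  | .dot a b => .dot (a.rename f) (b.rename f)

/-- Renaming of names in a right-hand side. -/
def Rhs.rename (f : ℕ → ℕ) : Rhs → Rhs
  | .name n => .name (f n)
  | .var v => .var v
  | .dot a b => .dot (a.rename f) (b.rename f)

/-- Renaming of names in a rule. -/
def Rule.rename (f : ℕ → ℕ) (r : Rule) : Rule :=
  ⟨f r.head, r.arity, r.rhs.rename f⟩

/-- Renaming of names in a program. -/
def Program.rename (f : ℕ → ℕ) (P : Program) : Program :=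
  P.image (Rule.rename f)

/-- The fresh substitution `[n⃗ := m⃗]` as a function on names. -/
def renFun (ns ms : List ℕ) (n : ℕ) : ℕ :=
  ((ns.zip ms).lookup n).getD n

/-- `M` has arity `k` under `P`: `M = n.q₁.⋯.qᵢ` where `n` has a rule of
arity `i + k`. -/
def Tm.ArityIs (P : Program) (M : Tm) (k : ℕ) : Prop :=
  ∃ r ∈ P, ∃ ts : List Tm, M = Tm.apps (.name r.head) ts ∧ ts.length + k = r.arity

/-!
Let `T` arise from `S` by replacing some occurrences of `M` by `N`. Evaluation of `S` is
simulated on `T`. If the head of `S` is not a replaced occurrence of `M`, a step of `S` is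
matched by the same rule on `T`. A step of `S = M.u₁.⋯.uₖ` is matched by the step of `M.v₁.⋯.vₖ`, and this term has a common reduct with
`T = N.v₁.⋯.vₖ`; evaluation is deterministic, so common reducts preserve termination. Finality
is preserved as well, because whether `n.q₁.⋯.qᵢ` reduces depends only on `n` and `i`. Taking
`S = X.M` and `T = X.N` (and symmetrically) gives `M ≈_P N`.
-/

namespace Tm

theorem apps_apps (t : Tm) (us vs : List Tm) : (t.apps us).apps vs = t.apps (us ++ vs) := by
  induction us generalizing t with
  | nil => rfl
  | cons u us ih => exact ih (t.dot u)

theorem apps_concat (t : Tm) (us : List Tm) (b : Tm) : t.apps (us ++ [b]) = (t.apps us).dot b :=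
  (apps_apps t us [b]).symm

def spine : Tm → ℕ × List Tm
  | .name n => (n, [])
  | .dot a b => (a.spine.1, a.spine.2 ++ [b])

theorem spine_apps (t : Tm) (us : List Tm) : (t.apps us).spine = (t.spine.1, t.spine.2 ++ us) := by
  induction us generalizing t with
  | nil => simp [apps]
  | cons u us ih => simp [apps, ih (t.dot u), spine]

theorem apps_name_injective {h h' : ℕ} {us us' : List Tm}
    (e : (name h).apps us = (name h').apps us') : h = h' ∧ us = us' := by
  simpa [spine_apps, spine] using congrArg spine e

theorem exists_eq_apps (t : Tm) : ∃ h us, t = (name h).apps us := by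
  induction t with
  | name n => exact ⟨n, [], rfl⟩
  | dot a b iha _ =>
    obtain ⟨h, us, rfl⟩ := iha
    exact ⟨h, us ++ [b], (apps_concat _ _ _).symm⟩

end Tm

theorem List.Forall₂.rel_getElem? {α β : Type*} {R : α → β → Prop} {l₁ : List α} {l₂ : List β}
    (h : List.Forall₂ R l₁ l₂) (i : ℕ) : Option.Rel R l₁[i]? l₂[i]? := by
  induction h generalizing i with
  | nil => exact .none
  | cons hab _ ih =>
    cases i with
    | zero => exact .some hab
    | succ i => exact ih i

namespace Rhs

theorem inst_rel {R : Tm → Tm → Prop} (hname : ∀ n, R (.name n) (.name n))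
    (hdot : ∀ {a a' b b'}, R a a' → R b b' → R (a.dot b) (a'.dot b'))
    {us vs : List Tm} (h : List.Forall₂ R us vs) (r : Rhs) :
    Option.Rel R (r.inst us) (r.inst vs) := by
  induction r with
  | name n => exact .some (hname n)
  | var v => exact h.rel_getElem? v
  | dot a b iha ihb =>
    simp only [inst]
    generalize a.inst us = x, a.inst vs = x', b.inst us = y, b.inst vs = y' at iha ihb
    cases iha with
    | none => exact .none
    | some hab =>
      cases ihb with
      | none => exact .none
      | some hbb => exact .some (hdot hab hbb)

theorem exists_inst_eq_some {us : List Tm} (r : Rhs) (h : ∀ v, r.HasVar v → v < us.length) :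
    ∃ A, r.inst us = some A := by
  induction r with
  | name n => exact ⟨_, rfl⟩
  | var v => exact ⟨us[v]'(h v rfl), List.getElem?_eq_getElem _⟩
  | dot a b iha ihb =>
    obtain ⟨A, hA⟩ := iha fun v hv => h v (.inl hv)
    obtain ⟨B, hB⟩ := ihb fun v hv => h v (.inr hv)
    exact ⟨A.dot B, by simp [inst, hA, hB]⟩

end Rhs

section Evaluation

variable {P P' : Program}

theorem Step.mono (hPP' : P ⊆ P') {A B : Tm} : Step P A B → Step P' A B :=
  fun ⟨r, hr, ts, hlen, hA, hB⟩ => ⟨r, hPP' hr, ts, hlen, hA, hB⟩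

theorem CommonRed.mono (hPP' : P ⊆ P') {A B : Tm} (h : CommonRed P A B) : CommonRed P' A B :=
  let ⟨t, hAt, hBt⟩ := h
  ⟨t, Relation.ReflTransGen.mono (fun _ _ => Step.mono hPP') _ _ hAt,
    Relation.ReflTransGen.mono (fun _ _ => Step.mono hPP') _ _ hBt⟩

theorem CommonRed.symm {A B : Tm} (h : CommonRed P A B) : CommonRed P B A :=
  let ⟨t, hAt, hBt⟩ := h
  ⟨t, hBt, hAt⟩

theorem exists_step_apps_name_iff (hP : P.Wf) {h : ℕ} {ts : List Tm} :
    (∃ A, Step P ((Tm.name h).apps ts) A) ↔ ∃ r ∈ P, r.head = h ∧ ts.length = r.arity := by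
  constructor
  · rintro ⟨A, r, hr, ts', hlen, heq, -⟩
    obtain ⟨rfl, rfl⟩ := Tm.apps_name_injective heq
    exact ⟨r, hr, rfl, hlen⟩
  · rintro ⟨r, hr, rfl, hlen⟩
    obtain ⟨A, hA⟩ := r.rhs.exists_inst_eq_some fun v hv => hlen ▸ hP.1 r hr v hv
    exact ⟨A, r, hr, ts, hlen, rfl, hA⟩

theorem Step.deterministic (hP : P.Wf) {S A B : Tm} (hA : Step P S A) (hB : Step P S B) :
    A = B := by
  obtain ⟨r, hr, ts, -, rfl, hA⟩ := hA
  obtain ⟨r', hr', ts', -, heq, hB⟩ := hB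
  obtain ⟨hh, rfl⟩ := Tm.apps_name_injective heq
  obtain rfl := hP.2 r hr r' hr' hh
  exact Option.some.inj (hA.symm.trans hB)

theorem Final.eq_of_steps {f g : Tm} (hf : Final P f) (h : Steps P f g) : g = f := by
  rcases h.cases_head with rfl | ⟨e, hfe, -⟩
  · rfl
  · exact absurd ⟨e, hfe⟩ hf

theorem Terminates.of_commonRed (hP : P.Wf) {A B : Tm} (hA : Terminates P A)
    (hAB : CommonRed P A B) : Terminates P B := by
  obtain ⟨f, hAf, hf⟩ := hA
  obtain ⟨t, hAt, hBt⟩ := hAB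
  obtain ⟨d, htd, hfd⟩ := Relation.church_rosser
    (fun _ _ _ hb hc => by obtain rfl := Step.deterministic hP hb hc; exact ⟨_, .refl, .refl⟩)
    hAt hAf
  obtain rfl := hf.eq_of_steps hfd
  exact ⟨d, hBt.trans htd, hf⟩

theorem Step.exists_of_forall₂ {R : Tm → Tm → Prop} (hrefl : ∀ t, R t t)
    (hdot : ∀ {a a' b b'}, R a a' → R b b' → R (a.dot b) (a'.dot b'))
    {t A : Tm} {us vs : List Tm} (hs : Step P (t.apps us) A) (h : List.Forall₂ R us vs) :
    ∃ B, Step P (t.apps vs) B ∧ R A B := by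
  obtain ⟨n, qs, rfl⟩ := t.exists_eq_apps
  obtain ⟨r, hr, ts, hlen, heq, hA⟩ := hs
  rw [Tm.apps_apps] at heq ⊢
  obtain ⟨rfl, rfl⟩ := Tm.apps_name_injective heq
  have hargs : List.Forall₂ R (qs ++ us) (qs ++ vs) :=
    List.rel_append (List.forall₂_same.mpr fun q _ => hrefl q) h
  have hinst := r.rhs.inst_rel (fun n => hrefl _) hdot hargs
  rw [hA] at hinst
  cases hB : r.rhs.inst (qs ++ vs) with
  | none => rw [hB] at hinst; cases hinst
  | some B =>
    rw [hB, Option.rel_some_some] at hinst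
    exact ⟨B, ⟨r, hr, qs ++ vs, by simpa [hargs.length_eq] using hlen, rfl, hB⟩, hinst⟩

theorem Tm.ArityIs.mono (hPP' : P ⊆ P') {M : Tm} {k : ℕ} (hM : M.ArityIs P k) :
    M.ArityIs P' k :=
  let ⟨r, hr, ts, hM, hlen⟩ := hM
  ⟨r, hPP' hr, ts, hM, hlen⟩

theorem Tm.ArityIs.exists_step_iff (hP : P.Wf) {M : Tm} {k : ℕ} (hM : M.ArityIs P k)
    {us : List Tm} : (∃ A, Step P (M.apps us) A) ↔ us.length = k := by
  obtain ⟨r, hr, qs, rfl, hlen⟩ := hM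
  rw [Tm.apps_apps, exists_step_apps_name_iff hP]
  constructor
  · rintro ⟨r', hr', hh, hlen'⟩
    obtain rfl := hP.2 r' hr' r hr hh
    simp only [List.length_append] at hlen'
    omega
  · intro hk
    exact ⟨r, hr, rfl, by simp only [List.length_append]; omega⟩

end Evaluation

inductive Replaced (M N : Tm) : Tm → Tm → Prop
  | refl (t : Tm) : Replaced M N t t
  | base : Replaced M N M N
  | dot {a a' b b' : Tm} : Replaced M N a a' → Replaced M N b b' → Replaced M N (a.dot b) (a'.dot b')

namespace Replaced

variable {P : Program} {M N S T : Tm} {k : ℕ}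

theorem cases_apps (h : Replaced M N S T) :
    (∃ us vs, S = M.apps us ∧ T = N.apps vs ∧ List.Forall₂ (Replaced M N) us vs) ∨
    ∃ n us vs, S = (Tm.name n).apps us ∧ T = (Tm.name n).apps vs ∧
      List.Forall₂ (Replaced M N) us vs := by
  induction h with
  | refl t =>
    obtain ⟨n, us, rfl⟩ := t.exists_eq_apps
    exact .inr ⟨n, us, us, rfl, rfl, List.forall₂_same.mpr fun u _ => .refl u⟩
  | base => exact .inl ⟨[], [], rfl, rfl, .nil⟩
  | dot _ hb ih _ =>
    have hlast := List.Forall₂.cons hb .nil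
    rcases ih with ⟨us, vs, rfl, rfl, hf⟩ | ⟨n, us, vs, rfl, rfl, hf⟩
    · exact .inl ⟨_, _, (Tm.apps_concat ..).symm, (Tm.apps_concat ..).symm, List.rel_append hf hlast⟩
    · exact .inr ⟨n, _, _, (Tm.apps_concat ..).symm, (Tm.apps_concat ..).symm,
        List.rel_append hf hlast⟩

theorem final (hP : P.Wf) (hM : M.ArityIs P k) (hN : N.ArityIs P k) (h : Replaced M N S T)
    (hS : Final P S) : Final P T := by
  unfold Final at hS ⊢
  rcases h.cases_apps with ⟨us, vs, rfl, rfl, hf⟩ | ⟨n, us, vs, rfl, rfl, hf⟩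
  · rwa [hM.exists_step_iff hP, hf.length_eq, ← hN.exists_step_iff hP] at hS
  · rwa [exists_step_apps_name_iff hP, hf.length_eq, ← exists_step_apps_name_iff hP] at hS

theorem exists_step (hP : P.Wf) (hM : M.ArityIs P k)
    (hcr : ∀ ts : List Tm, ts.length = k → CommonRed P (M.apps ts) (N.apps ts))
    (h : Replaced M N S T) {S₁ : Tm} (hS : Step P S S₁) :
    ∃ T' T₁, CommonRed P T' T ∧ Step P T' T₁ ∧ Replaced M N S₁ T₁ := by
  rcases h.cases_apps with ⟨us, vs, rfl, rfl, hf⟩ | ⟨n, us, vs, rfl, rfl, hf⟩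
  · obtain ⟨T₁, hT₁, hR⟩ := hS.exists_of_forall₂ refl dot hf
    have hk : vs.length = k := hf.length_eq ▸ (hM.exists_step_iff hP).mp ⟨_, hS⟩
    exact ⟨M.apps vs, T₁, hcr vs hk, hT₁, hR⟩
  · obtain ⟨T₁, hT₁, hR⟩ := hS.exists_of_forall₂ refl dot hf
    exact ⟨_, T₁, ⟨_, .refl, .refl⟩, hT₁, hR⟩

theorem terminates (hP : P.Wf) (hM : M.ArityIs P k) (hN : N.ArityIs P k)
    (hcr : ∀ ts : List Tm, ts.length = k → CommonRed P (M.apps ts) (N.apps ts))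
    (h : Replaced M N S T) (hS : Terminates P S) : Terminates P T := by
  obtain ⟨f, hSf, hf⟩ := hS
  induction hSf using Relation.ReflTransGen.head_induction_on generalizing T with
  | refl => exact ⟨T, .refl, h.final hP hM hN hf⟩
  | head hS _ ih =>
    obtain ⟨T', T₁, hT'T, hT', hR⟩ := h.exists_step hP hM hcr hS
    obtain ⟨g, hT₁g, hg⟩ := ih hR
    exact Terminates.of_commonRed hP ⟨g, .head hT' hT₁g, hg⟩ hT'T

end Replaced

theorem commonRed_ext_then_obsEq_general (P : Program) (M N : Tm) (k : ℕ)
    (hM : Tm.ArityIs P M k) (hN : Tm.ArityIs P N k)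
    (h : ∀ ts : List Tm, ts.length = k →
      CommonRed P (Tm.apps M ts) (Tm.apps N ts)) :
    ObsEq P M N := by
  intro P' hP' hPP' X
  have hM' := hM.mono hPP'
  have hN' := hN.mono hPP'
  have hcr : ∀ ts : List Tm, ts.length = k → CommonRed P' (M.apps ts) (N.apps ts) :=
    fun ts hts => (h ts hts).mono hPP'
  exact ⟨(Replaced.dot (.refl X) .base).terminates hP' hM' hN' hcr,
    (Replaced.dot (.refl X) .base).terminates hP' hN' hM' fun ts hts => (hcr ts hts).symm⟩

theorem commonRed_ext_then_obsEq (P : Program) (hP : P.Wf) (M N : Tm) (k : ℕ)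
    (hM : Tm.ArityIs P M k) (hN : Tm.ArityIs P N k)
    (h : ∀ ts : List Tm, ts.length = k →
      CommonRed P (Tm.apps M ts) (Tm.apps N ts)) :
    ObsEq P M N :=
  commonRed_ext_then_obsEq_general P M N k hM hN h
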